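/- arXiv:1408.4414 — 2 statements merged into one kernel-verified Lean document; each statement's English description precedes it below -/
import Mathlib

section
/- With the notation of the moving frame for a non-conformal harmonic map f to S³ (inner products as in matrix A, moving frame equations as in (2.5)), the transform fᵉ = (εi/2)sech²φ(f₁ - f̄₁) + tanh φ · N satisfies ⟨∂fᵉ, ∂fᵉ⟩ = -1 and |∂fᵉ|² = 1 + (1/2)|μ - 2εi∂φ|² sech²φ. -/
noncomputable section

/-- Wirtinger derivative `∂ = ∂/∂z`. -/
def dz {E : Type*} [NormedAddCommGroup E] [NormedSpace ℂ E] (g : ℂ → E) (z : ℂ) : E :=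
  (2 : ℂ)⁻¹ • (fderiv ℝ g z 1 - Complex.I • fderiv ℝ g z Complex.I)

/-- The ℂ-bilinear extension of the Euclidean inner product on `ℝ⁴` to `ℂ⁴`. -/
def binner (v w : Fin 4 → ℂ) : ℂ := ∑ i, v i * w i

section helpers

variable {E : Type*} [NormedAddCommGroup E] [NormedSpace ℂ E] {z : ℂ}

lemma dz_add {g h : ℂ → E} (hg : DifferentiableAt ℝ g z) (hh : DifferentiableAt ℝ h z) :
    dz (fun w => g w + h w) z = dz g z + dz h z := by
  simp only [dz, fderiv_fun_add hg hh, ContinuousLinearMap.add_apply]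
  module

lemma dz_sub {g h : ℂ → E} (hg : DifferentiableAt ℝ g z) (hh : DifferentiableAt ℝ h z) :
    dz (fun w => g w - h w) z = dz g z - dz h z := by
  simp only [dz, fderiv_fun_sub hg hh, ContinuousLinearMap.sub_apply]
  module

lemma dz_c (c : ℂ → ℂ) (z : ℂ) :
    dz c z = (2:ℂ)⁻¹ * (fderiv ℝ c z 1 - Complex.I * fderiv ℝ c z Complex.I) := rfl

lemma dz_smul {c : ℂ → ℂ} {g : ℂ → E} (hc : DifferentiableAt ℝ c z) (hg : DifferentiableAt ℝ g z) :
    dz (fun w => c w • g w) z = dz c z • g z + c z • dz g z := by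
  rw [dz_c c z]
  simp only [dz, fderiv_fun_smul hc hg, ContinuousLinearMap.add_apply,
    ContinuousLinearMap.smul_apply, ContinuousLinearMap.smulRight_apply]
  module

lemma dz_const (c : E) (z : ℂ) : dz (fun _ => c) z = 0 := by
  simp [dz, fderiv_const]

lemma dz_const_mul (k : ℂ) {c : ℂ → ℂ} (hc : DifferentiableAt ℝ c z) :
    dz (fun w => k * c w) z = k * dz c z := by
  rw [dz_c, dz_c, fderiv_const_mul hc k]
  simp only [ContinuousLinearMap.smul_apply, smul_eq_mul]
  ring

lemma dz_ofReal (u : ℂ → ℝ) (z : ℂ) (hu : DifferentiableAt ℝ u z) :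
    dz (fun w => ((u w : ℝ) : ℂ)) z
      = (2:ℂ)⁻¹ * (((fderiv ℝ u z 1 : ℝ) : ℂ) - Complex.I * ((fderiv ℝ u z Complex.I : ℝ) : ℂ)) := by
  have h : fderiv ℝ (fun w => ((u w : ℝ) : ℂ)) z = Complex.ofRealCLM.comp (fderiv ℝ u z) :=
    (Complex.ofRealCLM.hasFDerivAt.comp z hu.hasFDerivAt).fderiv
  rw [dz, h]
  simp [smul_eq_mul]

lemma dz_comp_ofReal {G : ℝ → ℝ} {u : ℂ → ℝ} {z : ℂ} {g' : ℝ}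
    (hu : DifferentiableAt ℝ u z) (hG : HasDerivAt G g' (u z)) :
    dz (fun w => ((G (u w) : ℝ) : ℂ)) z = (g' : ℂ) * dz (fun w => ((u w : ℝ) : ℂ)) z := by
  have hc : HasFDerivAt (fun w => G (u w)) (g' • fderiv ℝ u z) z :=
    hG.comp_hasFDerivAt z hu.hasFDerivAt
  rw [dz_ofReal _ _ hc.differentiableAt, dz_ofReal u z hu, hc.fderiv]
  simp only [ContinuousLinearMap.smul_apply, smul_eq_mul]
  push_cast
  ring

end helpers

lemma binner_add_left (u v w : Fin 4 → ℂ) : binner (u + v) w = binner u w + binner v w := by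
  simp [binner, add_mul, Finset.sum_add_distrib]

lemma binner_add_right (u v w : Fin 4 → ℂ) : binner u (v + w) = binner u v + binner u w := by
  simp [binner, mul_add, Finset.sum_add_distrib]

lemma binner_sub_left (u v w : Fin 4 → ℂ) : binner (u - v) w = binner u w - binner v w := by
  simp [binner, sub_mul, Finset.sum_sub_distrib]

lemma binner_sub_right (u v w : Fin 4 → ℂ) : binner u (v - w) = binner u v - binner u w := by
  simp [binner, mul_sub, Finset.sum_sub_distrib]

lemma binner_smul_left (c : ℂ) (u w : Fin 4 → ℂ) : binner (c • u) w = c * binner u w := by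
  simp [binner, Finset.mul_sum, mul_assoc]

lemma binner_smul_right (c : ℂ) (u w : Fin 4 → ℂ) : binner u (c • w) = c * binner u w := by
  rw [binner, binner, Finset.mul_sum]
  exact Finset.sum_congr rfl fun i _ => by simp; ring

lemma binner_comm (u w : Fin 4 → ℂ) : binner u w = binner w u := by
  simp [binner, mul_comm]

lemma binner_star_star (u w : Fin 4 → ℂ) : binner (star u) (star w) = star (binner u w) := by
  simp [binner, star_sum, star_mul']


set_option maxHeartbeats 4000000 in
set_option maxRecDepth 4000 in
open Complex Real in
/-- With the frame of a non-conformal harmonic map `f` to `S³`, the transform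
`fᵉ = (εi/2) sech²φ (f₁ - f̄₁) + tanh φ N` satisfies `⟨∂fᵉ, ∂fᵉ⟩ = -1` and
`|∂fᵉ|² = 1 + (1/2)|μ - 2εi∂φ|² sech²φ`. -/
theorem transform_adapted (ε : ℝ) (hε : ε = 1 ∨ ε = -1)
    (φ : ℂ → ℝ) (μ : ℂ → ℂ) (f f1 N fe : ℂ → Fin 4 → ℂ)
    (hφ : ∀ z, 0 < φ z)
    (hsf : ContDiff ℝ (⊤ : ℕ∞) f) (hsf1 : ContDiff ℝ (⊤ : ℕ∞) f1) (hsN : ContDiff ℝ (⊤ : ℕ∞) N)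
    (hsφ : ContDiff ℝ (⊤ : ℕ∞) φ) (hsμ : ContDiff ℝ (⊤ : ℕ∞) μ)
    -- reality of f and N
    (hfr : ∀ z, star (f z) = f z) (hNr : ∀ z, star (N z) = N z)
    -- inner products of the frame (matrix (2.4))
    (hA1 : ∀ z, binner (f z) (f z) = 1)
    (hA2 : ∀ z, binner (f1 z) (f1 z) = -1)
    (hA3 : ∀ z, binner (f1 z) (star (f1 z)) = Real.cosh (2 * φ z))
    (hA4 : ∀ z, binner (N z) (N z) = 1)
    (hA5 : ∀ z, binner (f z) (f1 z) = 0)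
    (hA6 : ∀ z, binner (f z) (N z) = 0)
    (hA7 : ∀ z, binner (f1 z) (N z) = 0)
    (hA8 : ∀ z, binner (star (f1 z)) (N z) = 0)
    -- moving frame equations (2.5)
    (hm1 : ∀ z, dz f z = f1 z)
    (hm2 : ∀ z, dz f1 z = f z
      + (2 * dz (fun w => (φ w : ℂ)) z) •
          (((Real.cosh (2 * φ z) / Real.sinh (2 * φ z) : ℝ) : ℂ) • f1 z
            + (((Real.sinh (2 * φ z))⁻¹ : ℝ) : ℂ) • star (f1 z))
      + μ z • N z)
    (hm3 : ∀ z, dz (fun w => star (f1 w)) z = -((Real.cosh (2 * φ z) : ℝ) : ℂ) • f z)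
    (hm4 : ∀ z, dz N z = -(μ z * (((Real.sinh (2 * φ z))⁻¹ : ℝ) : ℂ)) •
        ((((Real.sinh (2 * φ z))⁻¹ : ℝ) : ℂ) • f1 z
          + ((Real.cosh (2 * φ z) / Real.sinh (2 * φ z) : ℝ) : ℂ) • star (f1 z)))
    (hμ : ∀ z, binner (dz f1 z) (N z) = μ z)
    -- the transform fᵉ
    (hfe : ∀ z, fe z = ((ε : ℂ) * Complex.I / 2 * (((Real.cosh (φ z))⁻¹ ^ 2 : ℝ) : ℂ)) •
        (f1 z - star (f1 z)) + ((Real.tanh (φ z) : ℝ) : ℂ) • N z) :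
    ∀ z, binner (dz fe z) (dz fe z) = -1 ∧
      binner (dz fe z) (star (dz fe z))
        = 1 + (2 : ℂ)⁻¹ * ((‖μ z - 2 * ε * Complex.I
            * dz (fun w => (φ w : ℂ)) z‖ ^ 2 : ℝ) : ℂ)
          * (((Real.cosh (φ z))⁻¹ ^ 2 : ℝ) : ℂ) := by
  intro z
  have hdφ : DifferentiableAt ℝ φ z := (hsφ.differentiable (by simp)).differentiableAt
  have hdf1 : DifferentiableAt ℝ f1 z := (hsf1.differentiable (by simp)).differentiableAt
  have hdsf1 : DifferentiableAt ℝ (fun w => star (f1 w)) z := hdf1.star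
  have hdN : DifferentiableAt ℝ N z := (hsN.differentiable (by simp)).differentiableAt
  have hch : Real.cosh (φ z) ≠ 0 := (Real.cosh_pos (φ z)).ne'
  have hG1 := ((Real.hasDerivAt_cosh (φ z)).fun_inv hch).fun_pow 2
  have hG2' := (Real.hasDerivAt_sinh (φ z)).fun_div (Real.hasDerivAt_cosh (φ z)) hch
  rw [show (fun x => Real.sinh x / Real.cosh x) = Real.tanh from
    funext fun x => (Real.tanh_eq_sinh_div_cosh x).symm] at hG2'
  have hdG1 : DifferentiableAt ℝ (fun w => ((((Real.cosh (φ w))⁻¹ ^ 2 : ℝ)) : ℂ)) z :=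
    Complex.ofRealCLM.differentiableAt.comp z (hG1.differentiableAt.comp z hdφ)
  have hdG2 : DifferentiableAt ℝ (fun w => ((Real.tanh (φ w) : ℝ) : ℂ)) z :=
    Complex.ofRealCLM.differentiableAt.comp z (hG2'.differentiableAt.comp z hdφ)
  have hcA : DifferentiableAt ℝ
      (fun w => (ε:ℂ) * Complex.I / 2 * ((((Real.cosh (φ w))⁻¹ ^ 2 : ℝ)) : ℂ)) z :=
    (differentiableAt_const _).mul hdG1
  have hsub : DifferentiableAt ℝ (fun w => f1 w - star (f1 w)) z := hdf1.sub hdsf1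
  have e0 : fe = fun w => ((ε : ℂ) * Complex.I / 2 * (((Real.cosh (φ w))⁻¹ ^ 2 : ℝ) : ℂ)) •
      (f1 w - star (f1 w)) + ((Real.tanh (φ w) : ℝ) : ℂ) • N w := funext hfe
  have e1 : dz fe z
      = dz (fun w => ((ε : ℂ) * Complex.I / 2 * (((Real.cosh (φ w))⁻¹ ^ 2 : ℝ) : ℂ)) •
          (f1 w - star (f1 w))) z
        + dz (fun w => ((Real.tanh (φ w) : ℝ) : ℂ) • N w) z := by
    rw [e0]; exact dz_add (hcA.smul hsub) (hdG2.smul hdN)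
  rw [dz_smul hcA hsub, dz_smul hdG2 hdN, dz_sub hdf1 hdsf1] at e1
  rw [show dz (fun w => (ε:ℂ) * Complex.I / 2 * ((((Real.cosh (φ w))⁻¹ ^ 2 : ℝ)) : ℂ)) z
      = (ε:ℂ) * Complex.I / 2 * dz (fun w => ((((Real.cosh (φ w))⁻¹ ^ 2 : ℝ)) : ℂ)) z from
    dz_const_mul _ hdG1] at e1
  rw [dz_comp_ofReal hdφ hG1, dz_comp_ofReal hdφ hG2', hm2 z, hm3 z, hm4 z] at e1
  -- frame products
  have b11 := hA1 z
  have b22 := hA2 z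
  have b23 := hA3 z
  have b44 := hA4 z
  have b12 := hA5 z
  have b14 := hA6 z
  have b24 := hA7 z
  have b34 := hA8 z
  have b21 : binner (f1 z) (f z) = 0 := by rw [binner_comm]; exact b12
  have b41 : binner (N z) (f z) = 0 := by rw [binner_comm]; exact b14
  have b42 : binner (N z) (f1 z) = 0 := by rw [binner_comm]; exact b24
  have b43 : binner (N z) (star (f1 z)) = 0 := by rw [binner_comm]; exact b34
  have b32 : binner (star (f1 z)) (f1 z) = ((Real.cosh (2 * φ z) : ℝ) : ℂ) := by
    rw [binner_comm]; exact b23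
  have b33 : binner (star (f1 z)) (star (f1 z)) = -1 := by
    rw [binner_star_star, b22]; simp
  have b13 : binner (f z) (star (f1 z)) = 0 := by
    conv_lhs => rw [← hfr z]
    rw [binner_star_star, b12]; simp
  have b31 : binner (star (f1 z)) (f z) = 0 := by rw [binner_comm]; exact b13
  constructor
  · rw [e1]
    simp only [binner_add_left, binner_add_right, binner_sub_left, binner_sub_right,
      binner_smul_left, binner_smul_right, b11, b22, b23, b44, b12, b14, b24, b34,
      b21, b41, b42, b43, b32, b33, b13, b31]
    simp only [Real.cosh_two_mul, Real.sinh_two_mul, Real.tanh_eq_sinh_div_cosh]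
    push_cast
    have hXne : Complex.cosh ((φ z : ℝ) : ℂ) ≠ 0 := by
      rw [← Complex.ofReal_cosh]; exact_mod_cast hch
    have hYne : Complex.sinh ((φ z : ℝ) : ℂ) ≠ 0 := by
      rw [← Complex.ofReal_sinh]; exact_mod_cast (Real.sinh_pos_iff.mpr (hφ z)).ne'
    set X := Complex.cosh ((φ z : ℝ) : ℂ) with hXdef
    set Y := Complex.sinh ((φ z : ℝ) : ℂ) with hYdef
    set P := dz (fun w => ((φ w : ℝ) : ℂ)) z with hPdef
    set Q := (starRingEnd ℂ) P with hQdef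
    set M := μ z with hMdef
    set Nc := (starRingEnd ℂ) M with hNcdef
    set E := ((ε : ℝ) : ℂ) with hEdef
    have hI2 : Complex.I ^ 2 = -1 := Complex.I_sq
    have hE2 : E ^ 2 = 1 := by
      rw [hEdef]; rcases hε with h | h <;> rw [h] <;> norm_num
    have hXY : X ^ 2 = Y ^ 2 + 1 := by rw [hXdef, hYdef]; exact Complex.cosh_sq _
    have hXi : X * X⁻¹ = 1 := mul_inv_cancel₀ hXne
    have hYi : Y * Y⁻¹ = 1 := mul_inv_cancel₀ hYne
    apply mul_left_cancel₀ (show (X ^ 6 * Y ^ 4 : ℂ) ≠ 0 from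
      mul_ne_zero (pow_ne_zero _ hXne) (pow_ne_zero _ hYne))
    linear_combination (((1/4)*X^6*Y^4*X⁻¹^4*E^2 + (1/4)*X^6*Y^4*X⁻¹^4*M^2*E^2 + (-1/4)*X^6*Y^4*X⁻¹^6*Y⁻¹^2*P^2*E^2 + -1*X^6*Y^5*X⁻¹^6*Y⁻¹*P^2*E^2 + (1/2)*X^6*Y^6*X⁻¹^4*E^2 + -2*X^6*Y^6*X⁻¹^6*P^2*E^2 + (1/4)*X^6*Y^8*X⁻¹^4*E^2 + -2*X^6*Y^8*X⁻¹^6*P^2*E^2 + (1/4)*X^6*Y^8*X⁻¹^6*Y⁻¹^2*P^2*E^2 + 1*X^6*Y^9*X⁻¹^6*Y⁻¹*P^2*E^2 + (1/2)*X^8*Y^4*X⁻¹^4*E^2 + (1/2)*X^8*Y^6*X⁻¹^4*E^2 + -2*X^8*Y^6*X⁻¹^6*P^2*E^2 + (1/2)*X^8*Y^6*X⁻¹^6*Y⁻¹^2*P^2*E^2 + 2*X^8*Y^7*X⁻¹^6*Y⁻¹*P^2*E^2 + (1/4)*X^10*Y^4*X⁻¹^4*E^2 + (1/4)*X^10*Y^4*X⁻¹^6*Y⁻¹^2*P^2*E^2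 + 1*X^10*Y^5*X⁻¹^6*Y⁻¹*P^2*E^2)) * hI2 + (((-1/4)*X^6*Y^4*X⁻¹^4 + (-1/4)*X^6*Y^4*X⁻¹^4*M^2 + (1/4)*X^6*Y^4*X⁻¹^6*Y⁻¹^2*P^2 + 1*X^6*Y^5*X⁻¹^6*Y⁻¹*P^2 + (-1/2)*X^6*Y^6*X⁻¹^4 + 2*X^6*Y^6*X⁻¹^6*P^2 + (-1/4)*X^6*Y^8*X⁻¹^4 + 2*X^6*Y^8*X⁻¹^6*P^2 + (-1/4)*X^6*Y^8*X⁻¹^6*Y⁻¹^2*P^2 + -1*X^6*Y^9*X⁻¹^6*Y⁻¹*P^2 + (-1/2)*X^8*Y^4*X⁻¹^4 + (-1/2)*X^8*Y^6*X⁻¹^4 + 2*X^8*Y^6*X⁻¹^6*P^2 + (-1/2)*X^8*Y^6*X⁻¹^6*Y⁻¹^2*P^2 + -2*X^8*Y^7*X⁻¹^6*Y⁻¹*P^2 + (-1/4)*X^10*Y^4*X⁻¹^4 + (-1/4)*X^10*Y^4*X⁻¹^6*Y⁻¹^2*P^2 + -1*X^10*Y^5*X⁻¹^6*Y⁻¹*P^2))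 * hE2 + (((1/16)*Y^2*M^2 + (-1/4)*Y^2*P^2 + (-1/16)*Y^4*M^2 + (1/4)*Y^4*P*M*E*Complex.I + (-3/4)*Y^4*P^2 + (-1/4)*Y^6*P*M*E*Complex.I + -1*Y^6*P^2 + (1/16)*X^2*Y^2*M^2 + (-1/4)*X^2*Y^2*P*M*E*Complex.I + (-1/4)*X^2*Y^2*P^2 + (1/4)*X^2*Y^4 + (1/2)*X^2*Y^4*P*M*E*Complex.I + (1/4)*X^2*Y^6 + -1*X^2*Y^6*P^2 + (-1/4)*X^4*Y^2*P*M*E*Complex.I + (3/4)*X^4*Y^4 + 1*X^4*Y^4*P^2)) * hXY + (((1/4)*Y^4*Y⁻¹^2*P^2 + 1*Y^5*Y⁻¹*P^2 + 2*Y^6*P^2 + (-1/2)*Y^6*Y⁻¹^2*P*M*E*Complex.I + (-1/16)*Y^6*Y⁻¹^4*M^2 + (1/4)*Y^7*Y⁻¹^3*P*M*E*Complex.I + 2*Y^8*P^2 + (-1/4)*Y^8*Y⁻¹^2*P^2 + -1*Y^9*Y⁻¹*P^2 + (1/2)*Y^10*Y⁻¹^2*P*M*E*Complex.I + (1/16)*Y^10*Y⁻¹^4*M^2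 + (-1/4)*Y^11*Y⁻¹^3*P*M*E*Complex.I + (1/4)*X*Y^4*X⁻¹*Y⁻¹^2*P^2 + 1*X*Y^5*X⁻¹*Y⁻¹*P^2 + 2*X*Y^6*X⁻¹*P^2 + (-1/2)*X*Y^6*X⁻¹*Y⁻¹^2*P*M*E*Complex.I + (-1/16)*X*Y^6*X⁻¹*Y⁻¹^4*M^2 + (1/4)*X*Y^7*X⁻¹*Y⁻¹^3*P*M*E*Complex.I + 2*X*Y^8*X⁻¹*P^2 + (-1/4)*X*Y^8*X⁻¹*Y⁻¹^2*P^2 + -1*X*Y^9*X⁻¹*Y⁻¹*P^2 + (1/2)*X*Y^10*X⁻¹*Y⁻¹^2*P*M*E*Complex.I + (1/16)*X*Y^10*X⁻¹*Y⁻¹^4*M^2 + (-1/4)*X*Y^11*X⁻¹*Y⁻¹^3*P*M*E*Complex.I + (-1/4)*X^2*Y^4 + (-1/4)*X^2*Y^4*M^2 + (1/4)*X^2*Y^4*X⁻¹^2*Y⁻¹^2*P^2 + (1/4)*X^2*Y^5*Y⁻¹^3*P*M*E*Complex.I + 1*X^2*Y^5*X⁻¹^2*Y⁻¹*P^2 +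 (-1/2)*X^2*Y^6 + -1*X^2*Y^6*P*M*E*Complex.I + 2*X^2*Y^6*P^2 + (-1/2)*X^2*Y^6*Y⁻¹^2*P^2 + 2*X^2*Y^6*X⁻¹^2*P^2 + (-1/2)*X^2*Y^6*X⁻¹^2*Y⁻¹^2*P*M*E*Complex.I + (-1/16)*X^2*Y^6*X⁻¹^2*Y⁻¹^4*M^2 + -2*X^2*Y^7*Y⁻¹*P^2 + (1/4)*X^2*Y^7*X⁻¹^2*Y⁻¹^3*P*M*E*Complex.I + (-1/4)*X^2*Y^8 + 1*X^2*Y^8*P^2 + 1*X^2*Y^8*Y⁻¹^2*P*M*E*Complex.I + (1/8)*X^2*Y^8*Y⁻¹^4*M^2 + 2*X^2*Y^8*X⁻¹^2*P^2 + (-1/4)*X^2*Y^8*X⁻¹^2*Y⁻¹^2*P^2 + (-3/4)*X^2*Y^9*Y⁻¹^3*P*M*E*Complex.I + -1*X^2*Y^9*X⁻¹^2*Y⁻¹*P^2 + (1/2)*X^2*Y^10*X⁻¹^2*Y⁻¹^2*P*M*E*Complex.I + (1/16)*X^2*Y^10*X⁻¹^2*Y⁻¹^4*M^2 + (-1/4)*X^2*Y^11*X⁻¹^2*Y⁻¹^3*P*M*E*Complex.I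 + (-1/4)*X^3*Y^4*X⁻¹ + (-1/4)*X^3*Y^4*X⁻¹*M^2 + (1/4)*X^3*Y^4*X⁻¹^3*Y⁻¹^2*P^2 + (1/4)*X^3*Y^5*X⁻¹*Y⁻¹^3*P*M*E*Complex.I + 1*X^3*Y^5*X⁻¹^3*Y⁻¹*P^2 + (-1/2)*X^3*Y^6*X⁻¹ + -1*X^3*Y^6*X⁻¹*P*M*E*Complex.I + 2*X^3*Y^6*X⁻¹*P^2 + (-1/2)*X^3*Y^6*X⁻¹*Y⁻¹^2*P^2 + 2*X^3*Y^6*X⁻¹^3*P^2 + (-1/2)*X^3*Y^6*X⁻¹^3*Y⁻¹^2*P*M*E*Complex.I + (-1/16)*X^3*Y^6*X⁻¹^3*Y⁻¹^4*M^2 + -2*X^3*Y^7*X⁻¹*Y⁻¹*P^2 + (1/4)*X^3*Y^7*X⁻¹^3*Y⁻¹^3*P*M*E*Complex.I + (-1/4)*X^3*Y^8*X⁻¹ + 1*X^3*Y^8*X⁻¹*P^2 + 1*X^3*Y^8*X⁻¹*Y⁻¹^2*P*M*E*Complex.I + (1/8)*X^3*Y^8*X⁻¹*Y⁻¹^4*M^2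 + 2*X^3*Y^8*X⁻¹^3*P^2 + (-1/4)*X^3*Y^8*X⁻¹^3*Y⁻¹^2*P^2 + (-3/4)*X^3*Y^9*X⁻¹*Y⁻¹^3*P*M*E*Complex.I + -1*X^3*Y^9*X⁻¹^3*Y⁻¹*P^2 + (1/2)*X^3*Y^10*X⁻¹^3*Y⁻¹^2*P*M*E*Complex.I + (1/16)*X^3*Y^10*X⁻¹^3*Y⁻¹^4*M^2 + (-1/4)*X^3*Y^11*X⁻¹^3*Y⁻¹^3*P*M*E*Complex.I + (-1/2)*X^4*Y^4 + 1*X^4*Y^4*P*M*E*Complex.I + (-1/4)*X^4*Y^4*Y⁻¹^2*P^2 + (-1/4)*X^4*Y^4*X⁻¹^2 + (-1/4)*X^4*Y^4*X⁻¹^2*M^2 + (1/4)*X^4*Y^4*X⁻¹^4*Y⁻¹^2*P^2 + -1*X^4*Y^5*Y⁻¹*P^2 + (1/4)*X^4*Y^5*X⁻¹^2*Y⁻¹^3*P*M*E*Complex.I + 1*X^4*Y^5*X⁻¹^4*Y⁻¹*P^2 + (-1/2)*X^4*Y^6 + -2*X^4*Y^6*P^2 + (1/2)*X^4*Y^6*Y⁻¹^2*P*M*E*Complex.I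 + (1/16)*X^4*Y^6*Y⁻¹^4*M^2 + (-1/2)*X^4*Y^6*X⁻¹^2 + -1*X^4*Y^6*X⁻¹^2*P*M*E*Complex.I + 2*X^4*Y^6*X⁻¹^2*P^2 + (-1/2)*X^4*Y^6*X⁻¹^2*Y⁻¹^2*P^2 + 2*X^4*Y^6*X⁻¹^4*P^2 + (-1/2)*X^4*Y^6*X⁻¹^4*Y⁻¹^2*P*M*E*Complex.I + (-1/16)*X^4*Y^6*X⁻¹^4*Y⁻¹^4*M^2 + (-3/4)*X^4*Y^7*Y⁻¹^3*P*M*E*Complex.I + -2*X^4*Y^7*X⁻¹^2*Y⁻¹*P^2 + (1/4)*X^4*Y^7*X⁻¹^4*Y⁻¹^3*P*M*E*Complex.I + (-1/4)*X^4*Y^8*X⁻¹^2 + 1*X^4*Y^8*X⁻¹^2*P^2 + 1*X^4*Y^8*X⁻¹^2*Y⁻¹^2*P*M*E*Complex.I + (1/8)*X^4*Y^8*X⁻¹^2*Y⁻¹^4*M^2 + 2*X^4*Y^8*X⁻¹^4*P^2 + (-1/4)*X^4*Y^8*X⁻¹^4*Y⁻¹^2*P^2 + (-3/4)*X^4*Y^9*X⁻¹^2*Y⁻¹^3*P*M*E*Complex.I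 + -1*X^4*Y^9*X⁻¹^4*Y⁻¹*P^2 + (1/2)*X^4*Y^10*X⁻¹^4*Y⁻¹^2*P*M*E*Complex.I + (1/16)*X^4*Y^10*X⁻¹^4*Y⁻¹^4*M^2 + (-1/4)*X^4*Y^11*X⁻¹^4*Y⁻¹^3*P*M*E*Complex.I + (-1/2)*X^5*Y^4*X⁻¹ + 1*X^5*Y^4*X⁻¹*P*M*E*Complex.I + (-1/4)*X^5*Y^4*X⁻¹*Y⁻¹^2*P^2 + (-1/4)*X^5*Y^4*X⁻¹^3 + (-1/4)*X^5*Y^4*X⁻¹^3*M^2 + (1/4)*X^5*Y^4*X⁻¹^5*Y⁻¹^2*P^2 + -1*X^5*Y^5*X⁻¹*Y⁻¹*P^2 + (1/4)*X^5*Y^5*X⁻¹^3*Y⁻¹^3*P*M*E*Complex.I + 1*X^5*Y^5*X⁻¹^5*Y⁻¹*P^2 + (-1/2)*X^5*Y^6*X⁻¹ + -2*X^5*Y^6*X⁻¹*P^2 + (1/2)*X^5*Y^6*X⁻¹*Y⁻¹^2*P*M*E*Complex.I + (1/16)*X^5*Y^6*X⁻¹*Y⁻¹^4*M^2 + (-1/2)*X^5*Y^6*X⁻¹^3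 + -1*X^5*Y^6*X⁻¹^3*P*M*E*Complex.I + 2*X^5*Y^6*X⁻¹^3*P^2 + (-1/2)*X^5*Y^6*X⁻¹^3*Y⁻¹^2*P^2 + 2*X^5*Y^6*X⁻¹^5*P^2 + (-1/2)*X^5*Y^6*X⁻¹^5*Y⁻¹^2*P*M*E*Complex.I + (-1/16)*X^5*Y^6*X⁻¹^5*Y⁻¹^4*M^2 + (-3/4)*X^5*Y^7*X⁻¹*Y⁻¹^3*P*M*E*Complex.I + -2*X^5*Y^7*X⁻¹^3*Y⁻¹*P^2 + (1/4)*X^5*Y^7*X⁻¹^5*Y⁻¹^3*P*M*E*Complex.I + (-1/4)*X^5*Y^8*X⁻¹^3 + 1*X^5*Y^8*X⁻¹^3*P^2 + 1*X^5*Y^8*X⁻¹^3*Y⁻¹^2*P*M*E*Complex.I + (1/8)*X^5*Y^8*X⁻¹^3*Y⁻¹^4*M^2 + 2*X^5*Y^8*X⁻¹^5*P^2 + (-1/4)*X^5*Y^8*X⁻¹^5*Y⁻¹^2*P^2 + (-3/4)*X^5*Y^9*X⁻¹^3*Y⁻¹^3*P*M*E*Complex.I + -1*X^5*Y^9*X⁻¹^5*Y⁻¹*P^2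 + (1/2)*X^5*Y^10*X⁻¹^5*Y⁻¹^2*P*M*E*Complex.I + (1/16)*X^5*Y^10*X⁻¹^5*Y⁻¹^4*M^2 + (-1/4)*X^5*Y^11*X⁻¹^5*Y⁻¹^3*P*M*E*Complex.I + (-1/4)*X^6*Y^4 + 1*X^6*Y^4*P^2 + (-1/2)*X^6*Y^4*X⁻¹^2 + 1*X^6*Y^4*X⁻¹^2*P*M*E*Complex.I + (-1/4)*X^6*Y^4*X⁻¹^2*Y⁻¹^2*P^2 + (-1/4)*X^6*Y^5*Y⁻¹^3*P*M*E*Complex.I + -1*X^6*Y^5*X⁻¹^2*Y⁻¹*P^2 + (1/4)*X^6*Y^5*X⁻¹^4*Y⁻¹^3*P*M*E*Complex.I + (-1/2)*X^6*Y^6*X⁻¹^2 + -2*X^6*Y^6*X⁻¹^2*P^2 + (1/2)*X^6*Y^6*X⁻¹^2*Y⁻¹^2*P*M*E*Complex.I + (1/16)*X^6*Y^6*X⁻¹^2*Y⁻¹^4*M^2 + 2*X^6*Y^6*X⁻¹^4*P^2 + (-1/2)*X^6*Y^6*X⁻¹^4*Y⁻¹^2*P^2 + (-3/4)*X^6*Y^7*X⁻¹^2*Y⁻¹^3*P*M*E*Complex.I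 + -2*X^6*Y^7*X⁻¹^4*Y⁻¹*P^2 + 1*X^6*Y^8*X⁻¹^4*Y⁻¹^2*P*M*E*Complex.I + (1/8)*X^6*Y^8*X⁻¹^4*Y⁻¹^4*M^2 + (-3/4)*X^6*Y^9*X⁻¹^4*Y⁻¹^3*P*M*E*Complex.I + (-1/4)*X^7*Y^4*X⁻¹ + 1*X^7*Y^4*X⁻¹*P^2 + (-1/2)*X^7*Y^4*X⁻¹^3 + 1*X^7*Y^4*X⁻¹^3*P*M*E*Complex.I + (-1/4)*X^7*Y^4*X⁻¹^3*Y⁻¹^2*P^2 + (-1/4)*X^7*Y^5*X⁻¹*Y⁻¹^3*P*M*E*Complex.I + -1*X^7*Y^5*X⁻¹^3*Y⁻¹*P^2 + (1/4)*X^7*Y^5*X⁻¹^5*Y⁻¹^3*P*M*E*Complex.I + (-1/2)*X^7*Y^6*X⁻¹^3 + -2*X^7*Y^6*X⁻¹^3*P^2 + (1/2)*X^7*Y^6*X⁻¹^3*Y⁻¹^2*P*M*E*Complex.I + (1/16)*X^7*Y^6*X⁻¹^3*Y⁻¹^4*M^2 + 2*X^7*Y^6*X⁻¹^5*P^2 +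 (-1/2)*X^7*Y^6*X⁻¹^5*Y⁻¹^2*P^2 + (-3/4)*X^7*Y^7*X⁻¹^3*Y⁻¹^3*P*M*E*Complex.I + -2*X^7*Y^7*X⁻¹^5*Y⁻¹*P^2 + 1*X^7*Y^8*X⁻¹^5*Y⁻¹^2*P*M*E*Complex.I + (1/8)*X^7*Y^8*X⁻¹^5*Y⁻¹^4*M^2 + (-3/4)*X^7*Y^9*X⁻¹^5*Y⁻¹^3*P*M*E*Complex.I + (-1/4)*X^8*Y^4*X⁻¹^2 + 1*X^8*Y^4*X⁻¹^2*P^2 + (-1/4)*X^8*Y^4*X⁻¹^4*Y⁻¹^2*P^2 + (-1/4)*X^8*Y^5*X⁻¹^2*Y⁻¹^3*P*M*E*Complex.I + -1*X^8*Y^5*X⁻¹^4*Y⁻¹*P^2 + (1/2)*X^8*Y^6*X⁻¹^4*Y⁻¹^2*P*M*E*Complex.I + (1/16)*X^8*Y^6*X⁻¹^4*Y⁻¹^4*M^2 + (-3/4)*X^8*Y^7*X⁻¹^4*Y⁻¹^3*P*M*E*Complex.I + (-1/4)*X^9*Y^4*X⁻¹^3 + 1*X^9*Y^4*X⁻¹^3*P^2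 + (-1/4)*X^9*Y^4*X⁻¹^5*Y⁻¹^2*P^2 + (-1/4)*X^9*Y^5*X⁻¹^3*Y⁻¹^3*P*M*E*Complex.I + -1*X^9*Y^5*X⁻¹^5*Y⁻¹*P^2 + (1/2)*X^9*Y^6*X⁻¹^5*Y⁻¹^2*P*M*E*Complex.I + (1/16)*X^9*Y^6*X⁻¹^5*Y⁻¹^4*M^2 + (-3/4)*X^9*Y^7*X⁻¹^5*Y⁻¹^3*P*M*E*Complex.I + (-1/4)*X^10*Y^5*X⁻¹^4*Y⁻¹^3*P*M*E*Complex.I + (-1/4)*X^11*Y^5*X⁻¹^5*Y⁻¹^3*P*M*E*Complex.I)) * hXi + (((-1/16)*Y^2*M^2 + (1/4)*Y^2*P^2 + (-1/16)*Y^3*Y⁻¹*M^2 + (1/4)*Y^3*Y⁻¹*P^2 + (-1/4)*Y^4*P*M*E*Complex.I + 1*Y^4*P^2 + (-1/16)*Y^4*Y⁻¹^2*M^2 + (-1/4)*Y^5*Y⁻¹*P*M*E*Complex.I + (-1/16)*Y^5*Y⁻¹^3*M^2 + (1/16)*Y^6*M^2 + (-1/4)*Y^6*P^2 + (1/4)*Y^6*Y⁻¹^2*P*M*E*Complex.I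 + (1/16)*Y^7*Y⁻¹*M^2 + (-1/4)*Y^7*Y⁻¹*P^2 + (1/4)*Y^8*P*M*E*Complex.I + -1*Y^8*P^2 + (1/16)*Y^8*Y⁻¹^2*M^2 + (1/4)*Y^9*Y⁻¹*P*M*E*Complex.I + (1/16)*Y^9*Y⁻¹^3*M^2 + (-1/4)*Y^10*Y⁻¹^2*P*M*E*Complex.I + (1/4)*X^2*Y^2*P*M*E*Complex.I + (1/4)*X^2*Y^3*Y⁻¹*P*M*E*Complex.I + (1/8)*X^2*Y^4*M^2 + (-1/2)*X^2*Y^4*P^2 + (1/4)*X^2*Y^4*Y⁻¹^2*P*M*E*Complex.I + (1/8)*X^2*Y^5*Y⁻¹*M^2 + (-1/2)*X^2*Y^5*Y⁻¹*P^2 + (1/4)*X^2*Y^6*P*M*E*Complex.I + -2*X^2*Y^6*P^2 + (1/8)*X^2*Y^6*Y⁻¹^2*M^2 + (1/4)*X^2*Y^7*Y⁻¹*P*M*E*Complex.I + (1/8)*X^2*Y^7*Y⁻¹^3*M^2 + (-3/4)*X^2*Y^8*Y⁻¹^2*P*M*E*Complex.I + (1/16)*X^4*Y^2*M^2 + (-1/4)*X^4*Y^2*P^2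 + (1/16)*X^4*Y^3*Y⁻¹*M^2 + (-1/4)*X^4*Y^3*Y⁻¹*P^2 + (-1/4)*X^4*Y^4*P*M*E*Complex.I + -1*X^4*Y^4*P^2 + (1/16)*X^4*Y^4*Y⁻¹^2*M^2 + (-1/4)*X^4*Y^5*Y⁻¹*P*M*E*Complex.I + (1/16)*X^4*Y^5*Y⁻¹^3*M^2 + (-3/4)*X^4*Y^6*Y⁻¹^2*P*M*E*Complex.I + (-1/4)*X^6*Y^2*P*M*E*Complex.I + (-1/4)*X^6*Y^3*Y⁻¹*P*M*E*Complex.I + (-1/4)*X^6*Y^4*Y⁻¹^2*P*M*E*Complex.I)) * hYi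
  · have habs : ((‖μ z - 2 * ε * Complex.I * dz (fun w => (φ w : ℂ)) z‖ ^ 2 : ℝ) : ℂ)
        = (μ z - 2 * ε * Complex.I * dz (fun w => (φ w : ℂ)) z)
          * (starRingEnd ℂ) (μ z - 2 * ε * Complex.I * dz (fun w => (φ w : ℂ)) z) := by
      rw [Complex.sq_norm]; exact (Complex.mul_conj _).symm
    rw [habs, e1]
    simp only [star_add, star_sub, star_smul, star_star, hfr z, hNr z]
    simp only [binner_add_left, binner_add_right, binner_sub_left, binner_sub_right,
      binner_smul_left, binner_smul_right, b11, b22, b23, b44, b12, b14, b24, b34,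
      b21, b41, b42, b43, b32, b33, b13, b31]
    simp only [Complex.star_def, map_mul, map_add, map_sub, map_neg, map_div₀, map_inv₀,
      map_ofNat, Complex.conj_ofReal, Complex.conj_I, map_one]
    simp only [Real.cosh_two_mul, Real.sinh_two_mul, Real.tanh_eq_sinh_div_cosh]
    push_cast
    have hXne : Complex.cosh ((φ z : ℝ) : ℂ) ≠ 0 := by
      rw [← Complex.ofReal_cosh]; exact_mod_cast hch
    have hYne : Complex.sinh ((φ z : ℝ) : ℂ) ≠ 0 := by
      rw [← Complex.ofReal_sinh]; exact_mod_cast (Real.sinh_pos_iff.mpr (hφ z)).ne'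
    set X := Complex.cosh ((φ z : ℝ) : ℂ) with hXdef
    set Y := Complex.sinh ((φ z : ℝ) : ℂ) with hYdef
    set P := dz (fun w => ((φ w : ℝ) : ℂ)) z with hPdef
    set Q := (starRingEnd ℂ) P with hQdef
    set M := μ z with hMdef
    set Nc := (starRingEnd ℂ) M with hNcdef
    set E := ((ε : ℝ) : ℂ) with hEdef
    have hI2 : Complex.I ^ 2 = -1 := Complex.I_sq
    have hE2 : E ^ 2 = 1 := by
      rw [hEdef]; rcases hε with h | h <;> rw [h] <;> norm_num
    have hXY : X ^ 2 = Y ^ 2 + 1 := by rw [hXdef, hYdef]; exact Complex.cosh_sq _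
    have hXi : X * X⁻¹ = 1 := mul_inv_cancel₀ hXne
    have hYi : Y * Y⁻¹ = 1 := mul_inv_cancel₀ hYne
    apply mul_left_cancel₀ (show (X ^ 6 * Y ^ 4 : ℂ) ≠ 0 from
      mul_ne_zero (pow_ne_zero _ hXne) (pow_ne_zero _ hYne))
    linear_combination ((2*X^6*Y^4*X⁻¹^2*P*Q*E^2 + (-1/4)*X^6*Y^4*X⁻¹^4*E^2 + (-1/4)*X^6*Y^4*X⁻¹^4*M*Nc*E^2 + -1*X^6*Y^5*X⁻¹^6*Y⁻¹*P*Q*E^2 + (-1/2)*X^6*Y^6*X⁻¹^4*E^2 + -2*X^6*Y^6*X⁻¹^6*P*Q*E^2 + (1/4)*X^6*Y^6*X⁻¹^6*Y⁻¹^2*P*Q*E^2 + (-1/4)*X^6*Y^8*X⁻¹^4*E^2 + -2*X^6*Y^8*X⁻¹^6*P*Q*E^2 + 1*X^6*Y^9*X⁻¹^6*Y⁻¹*P*Q*E^2 + (-1/4)*X^6*Y^10*X⁻¹^6*Y⁻¹^2*P*Q*E^2 + (-1/2)*X^8*Y^4*X⁻¹^4*E^2 + (1/4)*X^8*Y^4*X⁻¹^6*Y⁻¹^2*P*Q*E^2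 + (-1/2)*X^8*Y^6*X⁻¹^4*E^2 + -2*X^8*Y^6*X⁻¹^6*P*Q*E^2 + 2*X^8*Y^7*X⁻¹^6*Y⁻¹*P*Q*E^2 + (-3/4)*X^8*Y^8*X⁻¹^6*Y⁻¹^2*P*Q*E^2 + (-1/4)*X^10*Y^4*X⁻¹^4*E^2 + 1*X^10*Y^5*X⁻¹^6*Y⁻¹*P*Q*E^2 + (-3/4)*X^10*Y^6*X⁻¹^6*Y⁻¹^2*P*Q*E^2 + (-1/4)*X^12*Y^4*X⁻¹^6*Y⁻¹^2*P*Q*E^2)) * hI2 + ((-2*X^6*Y^4*X⁻¹^2*P*Q + (1/4)*X^6*Y^4*X⁻¹^4 + (1/4)*X^6*Y^4*X⁻¹^4*M*Nc + 1*X^6*Y^5*X⁻¹^6*Y⁻¹*P*Q + (1/2)*X^6*Y^6*X⁻¹^4 + 2*X^6*Y^6*X⁻¹^6*P*Q + (-1/4)*X^6*Y^6*X⁻¹^6*Y⁻¹^2*P*Q + (1/4)*X^6*Y^8*X⁻¹^4 + 2*X^6*Y^8*X⁻¹^6*P*Q + -1*X^6*Y^9*X⁻¹^6*Y⁻¹*P*Q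 + (1/4)*X^6*Y^10*X⁻¹^6*Y⁻¹^2*P*Q + (1/2)*X^8*Y^4*X⁻¹^4 + (-1/4)*X^8*Y^4*X⁻¹^6*Y⁻¹^2*P*Q + (1/2)*X^8*Y^6*X⁻¹^4 + 2*X^8*Y^6*X⁻¹^6*P*Q + -2*X^8*Y^7*X⁻¹^6*Y⁻¹*P*Q + (3/4)*X^8*Y^8*X⁻¹^6*Y⁻¹^2*P*Q + (1/4)*X^10*Y^4*X⁻¹^4 + -1*X^10*Y^5*X⁻¹^6*Y⁻¹*P*Q + (3/4)*X^10*Y^6*X⁻¹^6*Y⁻¹^2*P*Q + (1/4)*X^12*Y^4*X⁻¹^6*Y⁻¹^2*P*Q)) * hE2 + (((1/8)*Y^2*Q*M*E*Complex.I + (-1/8)*Y^2*P*Nc*E*Complex.I + (1/16)*Y^4*M*Nc + (1/8)*Y^4*Q*M*E*Complex.I + (-1/8)*Y^4*P*Nc*E*Complex.I + (-3/4)*Y^4*P*Q + (-1/16)*Y^6*M*Nc + (-1/4)*Y^6*Q*M*E*Complex.I + (1/4)*Y^6*P*Nc*E*Complex.I + (-5/4)*Y^6*P*Q + (1/16)*X^2*Y^2*M*Nc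 + (1/8)*X^2*Y^2*Q*M*E*Complex.I + (-1/8)*X^2*Y^2*P*Nc*E*Complex.I + (1/4)*X^2*Y^2*P*Q + (-1/4)*X^2*Y^4 + (-1/4)*X^2*Y^4*M*Nc + (-1/4)*X^2*Y^4*Q*M*E*Complex.I + (1/4)*X^2*Y^4*P*Nc*E*Complex.I + -1*X^2*Y^4*P*Q + (-1/4)*X^2*Y^6 + -1*X^2*Y^6*P*Q + (1/16)*X^4*Y^2*M*Nc + (1/4)*X^4*Y^2*P*Q + (-3/4)*X^4*Y^4 + 1*X^4*Y^4*P*Q)) * hXY + ((1*Y^5*Y⁻¹*P*Q + (-1/8)*Y^5*Y⁻¹^3*Q*M*E*Complex.I + (1/8)*Y^5*Y⁻¹^3*P*Nc*E*Complex.I + 2*Y^6*P*Q + (-1/4)*Y^6*Y⁻¹^2*Q*M*E*Complex.I + (1/4)*Y^6*Y⁻¹^2*P*Nc*E*Complex.I + (-1/4)*Y^6*Y⁻¹^2*P*Q + 2*Y^8*P*Q + (-1/16)*Y^8*Y⁻¹^4*M*Nc + -1*Y^9*Y⁻¹*P*Q + (1/8)*Y^9*Y⁻¹^3*Q*M*E*Complex.I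 + (-1/8)*Y^9*Y⁻¹^3*P*Nc*E*Complex.I + (1/4)*Y^10*Y⁻¹^2*Q*M*E*Complex.I + (-1/4)*Y^10*Y⁻¹^2*P*Nc*E*Complex.I + (1/4)*Y^10*Y⁻¹^2*P*Q + (1/16)*Y^12*Y⁻¹^4*M*Nc + 1*X*Y^5*X⁻¹*Y⁻¹*P*Q + (-1/8)*X*Y^5*X⁻¹*Y⁻¹^3*Q*M*E*Complex.I + (1/8)*X*Y^5*X⁻¹*Y⁻¹^3*P*Nc*E*Complex.I + 2*X*Y^6*X⁻¹*P*Q + (-1/4)*X*Y^6*X⁻¹*Y⁻¹^2*Q*M*E*Complex.I + (1/4)*X*Y^6*X⁻¹*Y⁻¹^2*P*Nc*E*Complex.I + (-1/4)*X*Y^6*X⁻¹*Y⁻¹^2*P*Q + 2*X*Y^8*X⁻¹*P*Q + (-1/16)*X*Y^8*X⁻¹*Y⁻¹^4*M*Nc + -1*X*Y^9*X⁻¹*Y⁻¹*P*Q + (1/8)*X*Y^9*X⁻¹*Y⁻¹^3*Q*M*E*Complex.I + (-1/8)*X*Y^9*X⁻¹*Y⁻¹^3*P*Nc*E*Complex.I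 + (1/4)*X*Y^10*X⁻¹*Y⁻¹^2*Q*M*E*Complex.I + (-1/4)*X*Y^10*X⁻¹*Y⁻¹^2*P*Nc*E*Complex.I + (1/4)*X*Y^10*X⁻¹*Y⁻¹^2*P*Q + (1/16)*X*Y^12*X⁻¹*Y⁻¹^4*M*Nc + (1/4)*X^2*Y^4 + (1/4)*X^2*Y^4*M*Nc + (-1/4)*X^2*Y^4*Y⁻¹^2*P*Q + 1*X^2*Y^5*X⁻¹^2*Y⁻¹*P*Q + (-1/8)*X^2*Y^5*X⁻¹^2*Y⁻¹^3*Q*M*E*Complex.I + (1/8)*X^2*Y^5*X⁻¹^2*Y⁻¹^3*P*Nc*E*Complex.I + (1/2)*X^2*Y^6 + (-1/2)*X^2*Y^6*Q*M*E*Complex.I + (1/2)*X^2*Y^6*P*Nc*E*Complex.I + 2*X^2*Y^6*P*Q + (-1/16)*X^2*Y^6*Y⁻¹^4*M*Nc + 2*X^2*Y^6*X⁻¹^2*P*Q + (-1/4)*X^2*Y^6*X⁻¹^2*Y⁻¹^2*Q*M*E*Complex.I + (1/4)*X^2*Y^6*X⁻¹^2*Y⁻¹^2*P*Nc*E*Complex.I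 + (-1/4)*X^2*Y^6*X⁻¹^2*Y⁻¹^2*P*Q + -2*X^2*Y^7*Y⁻¹*P*Q + (1/4)*X^2*Y^7*Y⁻¹^3*Q*M*E*Complex.I + (-1/4)*X^2*Y^7*Y⁻¹^3*P*Nc*E*Complex.I + (1/4)*X^2*Y^8 + 1*X^2*Y^8*P*Q + (1/2)*X^2*Y^8*Y⁻¹^2*Q*M*E*Complex.I + (-1/2)*X^2*Y^8*Y⁻¹^2*P*Nc*E*Complex.I + (3/4)*X^2*Y^8*Y⁻¹^2*P*Q + 2*X^2*Y^8*X⁻¹^2*P*Q + (-1/16)*X^2*Y^8*X⁻¹^2*Y⁻¹^4*M*Nc + -1*X^2*Y^9*X⁻¹^2*Y⁻¹*P*Q + (1/8)*X^2*Y^9*X⁻¹^2*Y⁻¹^3*Q*M*E*Complex.I + (-1/8)*X^2*Y^9*X⁻¹^2*Y⁻¹^3*P*Nc*E*Complex.I + (3/16)*X^2*Y^10*Y⁻¹^4*M*Nc + (1/4)*X^2*Y^10*X⁻¹^2*Y⁻¹^2*Q*M*E*Complex.I + (-1/4)*X^2*Y^10*X⁻¹^2*Y⁻¹^2*P*Nc*E*Complex.I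 + (1/4)*X^2*Y^10*X⁻¹^2*Y⁻¹^2*P*Q + (1/16)*X^2*Y^12*X⁻¹^2*Y⁻¹^4*M*Nc + (1/4)*X^3*Y^4*X⁻¹ + (1/4)*X^3*Y^4*X⁻¹*M*Nc + (-1/4)*X^3*Y^4*X⁻¹*Y⁻¹^2*P*Q + 1*X^3*Y^5*X⁻¹^3*Y⁻¹*P*Q + (-1/8)*X^3*Y^5*X⁻¹^3*Y⁻¹^3*Q*M*E*Complex.I + (1/8)*X^3*Y^5*X⁻¹^3*Y⁻¹^3*P*Nc*E*Complex.I + (1/2)*X^3*Y^6*X⁻¹ + (-1/2)*X^3*Y^6*X⁻¹*Q*M*E*Complex.I + (1/2)*X^3*Y^6*X⁻¹*P*Nc*E*Complex.I + 2*X^3*Y^6*X⁻¹*P*Q + (-1/16)*X^3*Y^6*X⁻¹*Y⁻¹^4*M*Nc + 2*X^3*Y^6*X⁻¹^3*P*Q + (-1/4)*X^3*Y^6*X⁻¹^3*Y⁻¹^2*Q*M*E*Complex.I + (1/4)*X^3*Y^6*X⁻¹^3*Y⁻¹^2*P*Nc*E*Complex.I + (-1/4)*X^3*Y^6*X⁻¹^3*Y⁻¹^2*P*Q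 + -2*X^3*Y^7*X⁻¹*Y⁻¹*P*Q + (1/4)*X^3*Y^7*X⁻¹*Y⁻¹^3*Q*M*E*Complex.I + (-1/4)*X^3*Y^7*X⁻¹*Y⁻¹^3*P*Nc*E*Complex.I + (1/4)*X^3*Y^8*X⁻¹ + 1*X^3*Y^8*X⁻¹*P*Q + (1/2)*X^3*Y^8*X⁻¹*Y⁻¹^2*Q*M*E*Complex.I + (-1/2)*X^3*Y^8*X⁻¹*Y⁻¹^2*P*Nc*E*Complex.I + (3/4)*X^3*Y^8*X⁻¹*Y⁻¹^2*P*Q + 2*X^3*Y^8*X⁻¹^3*P*Q + (-1/16)*X^3*Y^8*X⁻¹^3*Y⁻¹^4*M*Nc + -1*X^3*Y^9*X⁻¹^3*Y⁻¹*P*Q + (1/8)*X^3*Y^9*X⁻¹^3*Y⁻¹^3*Q*M*E*Complex.I + (-1/8)*X^3*Y^9*X⁻¹^3*Y⁻¹^3*P*Nc*E*Complex.I + (3/16)*X^3*Y^10*X⁻¹*Y⁻¹^4*M*Nc + (1/4)*X^3*Y^10*X⁻¹^3*Y⁻¹^2*Q*M*E*Complex.I + (-1/4)*X^3*Y^10*X⁻¹^3*Y⁻¹^2*P*Nc*E*Complex.I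 + (1/4)*X^3*Y^10*X⁻¹^3*Y⁻¹^2*P*Q + (1/16)*X^3*Y^12*X⁻¹^3*Y⁻¹^4*M*Nc + (1/2)*X^4*Y^4 + (-1/2)*X^4*Y^4*M*Nc + (-1/2)*X^4*Y^4*Q*M*E*Complex.I + (1/2)*X^4*Y^4*P*Nc*E*Complex.I + -2*X^4*Y^4*P*Q + (1/4)*X^4*Y^4*X⁻¹^2 + (1/4)*X^4*Y^4*X⁻¹^2*M*Nc + (-1/4)*X^4*Y^4*X⁻¹^2*Y⁻¹^2*P*Q + -1*X^4*Y^5*Y⁻¹*P*Q + (1/8)*X^4*Y^5*Y⁻¹^3*Q*M*E*Complex.I + (-1/8)*X^4*Y^5*Y⁻¹^3*P*Nc*E*Complex.I + 1*X^4*Y^5*X⁻¹^4*Y⁻¹*P*Q + (-1/8)*X^4*Y^5*X⁻¹^4*Y⁻¹^3*Q*M*E*Complex.I + (1/8)*X^4*Y^5*X⁻¹^4*Y⁻¹^3*P*Nc*E*Complex.I + (1/2)*X^4*Y^6 + -2*X^4*Y^6*P*Q + (1/4)*X^4*Y^6*Y⁻¹^2*Q*M*E*Complex.I + (-1/4)*X^4*Y^6*Y⁻¹^2*P*Nc*E*Complex.I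 + (3/4)*X^4*Y^6*Y⁻¹^2*P*Q + (1/2)*X^4*Y^6*X⁻¹^2 + (-1/2)*X^4*Y^6*X⁻¹^2*Q*M*E*Complex.I + (1/2)*X^4*Y^6*X⁻¹^2*P*Nc*E*Complex.I + 2*X^4*Y^6*X⁻¹^2*P*Q + (-1/16)*X^4*Y^6*X⁻¹^2*Y⁻¹^4*M*Nc + 2*X^4*Y^6*X⁻¹^4*P*Q + (-1/4)*X^4*Y^6*X⁻¹^4*Y⁻¹^2*Q*M*E*Complex.I + (1/4)*X^4*Y^6*X⁻¹^4*Y⁻¹^2*P*Nc*E*Complex.I + (-1/4)*X^4*Y^6*X⁻¹^4*Y⁻¹^2*P*Q + -2*X^4*Y^7*X⁻¹^2*Y⁻¹*P*Q + (1/4)*X^4*Y^7*X⁻¹^2*Y⁻¹^3*Q*M*E*Complex.I + (-1/4)*X^4*Y^7*X⁻¹^2*Y⁻¹^3*P*Nc*E*Complex.I + (3/16)*X^4*Y^8*Y⁻¹^4*M*Nc + (1/4)*X^4*Y^8*X⁻¹^2 + 1*X^4*Y^8*X⁻¹^2*P*Q + (1/2)*X^4*Y^8*X⁻¹^2*Y⁻¹^2*Q*M*E*Complex.I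 + (-1/2)*X^4*Y^8*X⁻¹^2*Y⁻¹^2*P*Nc*E*Complex.I + (3/4)*X^4*Y^8*X⁻¹^2*Y⁻¹^2*P*Q + 2*X^4*Y^8*X⁻¹^4*P*Q + (-1/16)*X^4*Y^8*X⁻¹^4*Y⁻¹^4*M*Nc + -1*X^4*Y^9*X⁻¹^4*Y⁻¹*P*Q + (1/8)*X^4*Y^9*X⁻¹^4*Y⁻¹^3*Q*M*E*Complex.I + (-1/8)*X^4*Y^9*X⁻¹^4*Y⁻¹^3*P*Nc*E*Complex.I + (3/16)*X^4*Y^10*X⁻¹^2*Y⁻¹^4*M*Nc + (1/4)*X^4*Y^10*X⁻¹^4*Y⁻¹^2*Q*M*E*Complex.I + (-1/4)*X^4*Y^10*X⁻¹^4*Y⁻¹^2*P*Nc*E*Complex.I + (1/4)*X^4*Y^10*X⁻¹^4*Y⁻¹^2*P*Q + (1/16)*X^4*Y^12*X⁻¹^4*Y⁻¹^4*M*Nc + (1/2)*X^5*Y^4*X⁻¹ + (-1/2)*X^5*Y^4*X⁻¹*M*Nc + (-1/2)*X^5*Y^4*X⁻¹*Q*M*E*Complex.I + (1/2)*X^5*Y^4*X⁻¹*P*Nc*E*Complex.I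 + -2*X^5*Y^4*X⁻¹*P*Q + (1/4)*X^5*Y^4*X⁻¹^3 + (1/4)*X^5*Y^4*X⁻¹^3*M*Nc + (-1/4)*X^5*Y^4*X⁻¹^3*Y⁻¹^2*P*Q + -1*X^5*Y^5*X⁻¹*Y⁻¹*P*Q + (1/8)*X^5*Y^5*X⁻¹*Y⁻¹^3*Q*M*E*Complex.I + (-1/8)*X^5*Y^5*X⁻¹*Y⁻¹^3*P*Nc*E*Complex.I + 1*X^5*Y^5*X⁻¹^5*Y⁻¹*P*Q + (-1/8)*X^5*Y^5*X⁻¹^5*Y⁻¹^3*Q*M*E*Complex.I + (1/8)*X^5*Y^5*X⁻¹^5*Y⁻¹^3*P*Nc*E*Complex.I + (1/2)*X^5*Y^6*X⁻¹ + -2*X^5*Y^6*X⁻¹*P*Q + (1/4)*X^5*Y^6*X⁻¹*Y⁻¹^2*Q*M*E*Complex.I + (-1/4)*X^5*Y^6*X⁻¹*Y⁻¹^2*P*Nc*E*Complex.I + (3/4)*X^5*Y^6*X⁻¹*Y⁻¹^2*P*Q + (1/2)*X^5*Y^6*X⁻¹^3 + (-1/2)*X^5*Y^6*X⁻¹^3*Q*M*E*Complex.I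 + (1/2)*X^5*Y^6*X⁻¹^3*P*Nc*E*Complex.I + 2*X^5*Y^6*X⁻¹^3*P*Q + (-1/16)*X^5*Y^6*X⁻¹^3*Y⁻¹^4*M*Nc + 2*X^5*Y^6*X⁻¹^5*P*Q + (-1/4)*X^5*Y^6*X⁻¹^5*Y⁻¹^2*Q*M*E*Complex.I + (1/4)*X^5*Y^6*X⁻¹^5*Y⁻¹^2*P*Nc*E*Complex.I + (-1/4)*X^5*Y^6*X⁻¹^5*Y⁻¹^2*P*Q + -2*X^5*Y^7*X⁻¹^3*Y⁻¹*P*Q + (1/4)*X^5*Y^7*X⁻¹^3*Y⁻¹^3*Q*M*E*Complex.I + (-1/4)*X^5*Y^7*X⁻¹^3*Y⁻¹^3*P*Nc*E*Complex.I + (3/16)*X^5*Y^8*X⁻¹*Y⁻¹^4*M*Nc + (1/4)*X^5*Y^8*X⁻¹^3 + 1*X^5*Y^8*X⁻¹^3*P*Q + (1/2)*X^5*Y^8*X⁻¹^3*Y⁻¹^2*Q*M*E*Complex.I + (-1/2)*X^5*Y^8*X⁻¹^3*Y⁻¹^2*P*Nc*E*Complex.I + (3/4)*X^5*Y^8*X⁻¹^3*Y⁻¹^2*P*Q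 + 2*X^5*Y^8*X⁻¹^5*P*Q + (-1/16)*X^5*Y^8*X⁻¹^5*Y⁻¹^4*M*Nc + -1*X^5*Y^9*X⁻¹^5*Y⁻¹*P*Q + (1/8)*X^5*Y^9*X⁻¹^5*Y⁻¹^3*Q*M*E*Complex.I + (-1/8)*X^5*Y^9*X⁻¹^5*Y⁻¹^3*P*Nc*E*Complex.I + (3/16)*X^5*Y^10*X⁻¹^3*Y⁻¹^4*M*Nc + (1/4)*X^5*Y^10*X⁻¹^5*Y⁻¹^2*Q*M*E*Complex.I + (-1/4)*X^5*Y^10*X⁻¹^5*Y⁻¹^2*P*Nc*E*Complex.I + (1/4)*X^5*Y^10*X⁻¹^5*Y⁻¹^2*P*Q + (1/16)*X^5*Y^12*X⁻¹^5*Y⁻¹^4*M*Nc + (1/4)*X^6*Y^4 + 1*X^6*Y^4*P*Q + (1/4)*X^6*Y^4*Y⁻¹^2*P*Q + (1/2)*X^6*Y^4*X⁻¹^2 + (1/2)*X^6*Y^4*X⁻¹^2*Q*M*E*Complex.I + (-1/2)*X^6*Y^4*X⁻¹^2*P*Nc*E*Complex.I + (-1/4)*X^6*Y^4*X⁻¹^4*Y⁻¹^2*P*Q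 + -1*X^6*Y^5*X⁻¹^2*Y⁻¹*P*Q + (1/8)*X^6*Y^5*X⁻¹^2*Y⁻¹^3*Q*M*E*Complex.I + (-1/8)*X^6*Y^5*X⁻¹^2*Y⁻¹^3*P*Nc*E*Complex.I + (1/16)*X^6*Y^6*Y⁻¹^4*M*Nc + (1/2)*X^6*Y^6*X⁻¹^2 + -2*X^6*Y^6*X⁻¹^2*P*Q + (1/4)*X^6*Y^6*X⁻¹^2*Y⁻¹^2*Q*M*E*Complex.I + (-1/4)*X^6*Y^6*X⁻¹^2*Y⁻¹^2*P*Nc*E*Complex.I + (3/4)*X^6*Y^6*X⁻¹^2*Y⁻¹^2*P*Q + 2*X^6*Y^6*X⁻¹^4*P*Q + (-1/16)*X^6*Y^6*X⁻¹^4*Y⁻¹^4*M*Nc + -2*X^6*Y^7*X⁻¹^4*Y⁻¹*P*Q + (1/4)*X^6*Y^7*X⁻¹^4*Y⁻¹^3*Q*M*E*Complex.I + (-1/4)*X^6*Y^7*X⁻¹^4*Y⁻¹^3*P*Nc*E*Complex.I + (3/16)*X^6*Y^8*X⁻¹^2*Y⁻¹^4*M*Nc + (1/2)*X^6*Y^8*X⁻¹^4*Y⁻¹^2*Q*M*E*Complex.I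 + (-1/2)*X^6*Y^8*X⁻¹^4*Y⁻¹^2*P*Nc*E*Complex.I + (3/4)*X^6*Y^8*X⁻¹^4*Y⁻¹^2*P*Q + (3/16)*X^6*Y^10*X⁻¹^4*Y⁻¹^4*M*Nc + (1/4)*X^7*Y^4*X⁻¹ + 1*X^7*Y^4*X⁻¹*P*Q + (1/4)*X^7*Y^4*X⁻¹*Y⁻¹^2*P*Q + (1/2)*X^7*Y^4*X⁻¹^3 + (1/2)*X^7*Y^4*X⁻¹^3*Q*M*E*Complex.I + (-1/2)*X^7*Y^4*X⁻¹^3*P*Nc*E*Complex.I + (-1/4)*X^7*Y^4*X⁻¹^5*Y⁻¹^2*P*Q + -1*X^7*Y^5*X⁻¹^3*Y⁻¹*P*Q + (1/8)*X^7*Y^5*X⁻¹^3*Y⁻¹^3*Q*M*E*Complex.I + (-1/8)*X^7*Y^5*X⁻¹^3*Y⁻¹^3*P*Nc*E*Complex.I + (1/16)*X^7*Y^6*X⁻¹*Y⁻¹^4*M*Nc + (1/2)*X^7*Y^6*X⁻¹^3 + -2*X^7*Y^6*X⁻¹^3*P*Q + (1/4)*X^7*Y^6*X⁻¹^3*Y⁻¹^2*Q*M*E*Complex.I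 + (-1/4)*X^7*Y^6*X⁻¹^3*Y⁻¹^2*P*Nc*E*Complex.I + (3/4)*X^7*Y^6*X⁻¹^3*Y⁻¹^2*P*Q + 2*X^7*Y^6*X⁻¹^5*P*Q + (-1/16)*X^7*Y^6*X⁻¹^5*Y⁻¹^4*M*Nc + -2*X^7*Y^7*X⁻¹^5*Y⁻¹*P*Q + (1/4)*X^7*Y^7*X⁻¹^5*Y⁻¹^3*Q*M*E*Complex.I + (-1/4)*X^7*Y^7*X⁻¹^5*Y⁻¹^3*P*Nc*E*Complex.I + (3/16)*X^7*Y^8*X⁻¹^3*Y⁻¹^4*M*Nc + (1/2)*X^7*Y^8*X⁻¹^5*Y⁻¹^2*Q*M*E*Complex.I + (-1/2)*X^7*Y^8*X⁻¹^5*Y⁻¹^2*P*Nc*E*Complex.I + (3/4)*X^7*Y^8*X⁻¹^5*Y⁻¹^2*P*Q + (3/16)*X^7*Y^10*X⁻¹^5*Y⁻¹^4*M*Nc + (1/4)*X^8*Y^4*X⁻¹^2 + 1*X^8*Y^4*X⁻¹^2*P*Q + (1/4)*X^8*Y^4*X⁻¹^2*Y⁻¹^2*P*Q + -1*X^8*Y^5*X⁻¹^4*Y⁻¹*P*Q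 + (1/8)*X^8*Y^5*X⁻¹^4*Y⁻¹^3*Q*M*E*Complex.I + (-1/8)*X^8*Y^5*X⁻¹^4*Y⁻¹^3*P*Nc*E*Complex.I + (1/16)*X^8*Y^6*X⁻¹^2*Y⁻¹^4*M*Nc + (1/4)*X^8*Y^6*X⁻¹^4*Y⁻¹^2*Q*M*E*Complex.I + (-1/4)*X^8*Y^6*X⁻¹^4*Y⁻¹^2*P*Nc*E*Complex.I + (3/4)*X^8*Y^6*X⁻¹^4*Y⁻¹^2*P*Q + (3/16)*X^8*Y^8*X⁻¹^4*Y⁻¹^4*M*Nc + (1/4)*X^9*Y^4*X⁻¹^3 + 1*X^9*Y^4*X⁻¹^3*P*Q + (1/4)*X^9*Y^4*X⁻¹^3*Y⁻¹^2*P*Q + -1*X^9*Y^5*X⁻¹^5*Y⁻¹*P*Q + (1/8)*X^9*Y^5*X⁻¹^5*Y⁻¹^3*Q*M*E*Complex.I + (-1/8)*X^9*Y^5*X⁻¹^5*Y⁻¹^3*P*Nc*E*Complex.I + (1/16)*X^9*Y^6*X⁻¹^3*Y⁻¹^4*M*Nc + (1/4)*X^9*Y^6*X⁻¹^5*Y⁻¹^2*Q*M*E*Complex.I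 + (-1/4)*X^9*Y^6*X⁻¹^5*Y⁻¹^2*P*Nc*E*Complex.I + (3/4)*X^9*Y^6*X⁻¹^5*Y⁻¹^2*P*Q + (3/16)*X^9*Y^8*X⁻¹^5*Y⁻¹^4*M*Nc + (1/4)*X^10*Y^4*X⁻¹^4*Y⁻¹^2*P*Q + (1/16)*X^10*Y^6*X⁻¹^4*Y⁻¹^4*M*Nc + (1/4)*X^11*Y^4*X⁻¹^5*Y⁻¹^2*P*Q + (1/16)*X^11*Y^6*X⁻¹^5*Y⁻¹^4*M*Nc)) * hXi + (((-1/8)*Y^2*Q*M*E*Complex.I + (1/8)*Y^2*P*Nc*E*Complex.I + (-1/8)*Y^3*Y⁻¹*Q*M*E*Complex.I + (1/8)*Y^3*Y⁻¹*P*Nc*E*Complex.I + (-1/16)*Y^4*M*Nc + (-1/4)*Y^4*Q*M*E*Complex.I + (1/4)*Y^4*P*Nc*E*Complex.I + (3/4)*Y^4*P*Q + (-1/8)*Y^4*Y⁻¹^2*Q*M*E*Complex.I + (1/8)*Y^4*Y⁻¹^2*P*Nc*E*Complex.I + (-1/16)*Y^5*Y⁻¹*M*Nc + (-1/4)*Y^5*Y⁻¹*Q*M*E*Complex.I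 + (1/4)*Y^5*Y⁻¹*P*Nc*E*Complex.I + (-1/4)*Y^5*Y⁻¹*P*Q + (1/8)*Y^6*Q*M*E*Complex.I + (-1/8)*Y^6*P*Nc*E*Complex.I + (-1/16)*Y^6*Y⁻¹^2*M*Nc + (1/8)*Y^7*Y⁻¹*Q*M*E*Complex.I + (-1/8)*Y^7*Y⁻¹*P*Nc*E*Complex.I + (-1/16)*Y^7*Y⁻¹^3*M*Nc + (1/16)*Y^8*M*Nc + (1/4)*Y^8*Q*M*E*Complex.I + (-1/4)*Y^8*P*Nc*E*Complex.I + (-3/4)*Y^8*P*Q + (1/8)*Y^8*Y⁻¹^2*Q*M*E*Complex.I + (-1/8)*Y^8*Y⁻¹^2*P*Nc*E*Complex.I + (1/16)*Y^9*Y⁻¹*M*Nc + (1/4)*Y^9*Y⁻¹*Q*M*E*Complex.I + (-1/4)*Y^9*Y⁻¹*P*Nc*E*Complex.I + (1/4)*Y^9*Y⁻¹*P*Q + (1/16)*Y^10*Y⁻¹^2*M*Nc + (1/16)*Y^11*Y⁻¹^3*M*Nc + (-1/16)*X^2*Y^2*M*Nc + (-1/4)*X^2*Y^2*P*Q + (-1/16)*X^2*Y^3*Y⁻¹*M*Nc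 + (-1/4)*X^2*Y^3*Y⁻¹*P*Q + (1/4)*X^2*Y^4*Q*M*E*Complex.I + (-1/4)*X^2*Y^4*P*Nc*E*Complex.I + (-1/16)*X^2*Y^4*Y⁻¹^2*M*Nc + (1/4)*X^2*Y^5*Y⁻¹*Q*M*E*Complex.I + (-1/4)*X^2*Y^5*Y⁻¹*P*Nc*E*Complex.I + (-1/16)*X^2*Y^5*Y⁻¹^3*M*Nc + (3/16)*X^2*Y^6*M*Nc + (1/2)*X^2*Y^6*Q*M*E*Complex.I + (-1/2)*X^2*Y^6*P*Nc*E*Complex.I + (-5/4)*X^2*Y^6*P*Q + (1/4)*X^2*Y^6*Y⁻¹^2*Q*M*E*Complex.I + (-1/4)*X^2*Y^6*Y⁻¹^2*P*Nc*E*Complex.I + (3/16)*X^2*Y^7*Y⁻¹*M*Nc + (1/2)*X^2*Y^7*Y⁻¹*Q*M*E*Complex.I + (-1/2)*X^2*Y^7*Y⁻¹*P*Nc*E*Complex.I + (3/4)*X^2*Y^7*Y⁻¹*P*Q + (3/16)*X^2*Y^8*Y⁻¹^2*M*Nc + (3/16)*X^2*Y^9*Y⁻¹^3*M*Nc + (1/8)*X^4*Y^2*Q*M*E*Complex.I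 + (-1/8)*X^4*Y^2*P*Nc*E*Complex.I + (1/8)*X^4*Y^3*Y⁻¹*Q*M*E*Complex.I + (-1/8)*X^4*Y^3*Y⁻¹*P*Nc*E*Complex.I + (3/16)*X^4*Y^4*M*Nc + (1/4)*X^4*Y^4*Q*M*E*Complex.I + (-1/4)*X^4*Y^4*P*Nc*E*Complex.I + (-1/4)*X^4*Y^4*P*Q + (1/8)*X^4*Y^4*Y⁻¹^2*Q*M*E*Complex.I + (-1/8)*X^4*Y^4*Y⁻¹^2*P*Nc*E*Complex.I + (3/16)*X^4*Y^5*Y⁻¹*M*Nc + (1/4)*X^4*Y^5*Y⁻¹*Q*M*E*Complex.I + (-1/4)*X^4*Y^5*Y⁻¹*P*Nc*E*Complex.I + (3/4)*X^4*Y^5*Y⁻¹*P*Q + (3/16)*X^4*Y^6*Y⁻¹^2*M*Nc + (3/16)*X^4*Y^7*Y⁻¹^3*M*Nc + (1/16)*X^6*Y^2*M*Nc + (1/4)*X^6*Y^2*P*Q + (1/16)*X^6*Y^3*Y⁻¹*M*Nc + (1/4)*X^6*Y^3*Y⁻¹*P*Q + (1/16)*X^6*Y^4*Y⁻¹^2*M*Nc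 + (1/16)*X^6*Y^5*Y⁻¹^3*M*Nc)) * hYi
end
end

section
/- Suppose μ = μᵉ and μ is non-vanishing, where (φ,μ) and (φᵉ,μᵉ) each satisfy the compatibility conditions and are related by ∂φ csch 2φ = ∂φᵉ csch 2φᵉ (derived from ∂̄(μ - μᵉ) = 0). Then φ = φᵉ. -/
noncomputable section

/-- Wirtinger derivative `∂̄ = ∂/∂z̄`. -/
def dzbar {E : Type*} [NormedAddCommGroup E] [NormedSpace ℂ E] (g : ℂ → E) (z : ℂ) : E :=
  (2 : ℂ)⁻¹ • (fderiv ℝ g z 1 + Complex.I • fderiv ℝ g z Complex.I)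

open Complex

-- fderiv of real-to-complex coe composition
lemma fderiv_ofReal_comp (u : ℂ → ℝ) (z : ℂ) (hu : DifferentiableAt ℝ u z) (v : ℂ) :
    fderiv ℝ (fun w => (u w : ℂ)) z v = ((fderiv ℝ u z v : ℝ) : ℂ) := by
  have : fderiv ℝ (fun w => (u w : ℂ)) z = Complex.ofRealCLM.comp (fderiv ℝ u z) :=
    (Complex.ofRealCLM.hasFDerivAt.comp z hu.hasFDerivAt).fderiv
  rw [this]; rfl

lemma dzbar_eq_conj_dz (u : ℂ → ℝ) (z : ℂ) (hu : DifferentiableAt ℝ u z) :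
    dzbar (fun w => (u w : ℂ)) z = (starRingEnd ℂ) (dz (fun w => (u w : ℂ)) z) := by
  simp only [dz, dzbar, fderiv_ofReal_comp u z hu, smul_eq_mul]
  simp only [map_mul, map_sub, map_inv₀, Complex.conj_ofReal, Complex.conj_I, map_ofNat]
  ring

lemma dzbar_mul (f g : ℂ → ℂ) (z : ℂ) (hf : DifferentiableAt ℝ f z)
    (hg : DifferentiableAt ℝ g z) :
    dzbar (fun w => f w * g w) z = dzbar f z * g z + f z * dzbar g z := by
  have h := fderiv_fun_mul (𝕜 := ℝ) hf hg
  simp only [dzbar, h, ContinuousLinearMap.add_apply, ContinuousLinearMap.smul_apply,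
    smul_eq_mul]
  ring

lemma dzbar_comp_ofReal (h : ℝ → ℝ) (u : ℂ → ℝ) (z : ℂ)
    (hh : DifferentiableAt ℝ h (u z)) (hu : DifferentiableAt ℝ u z) :
    dzbar (fun w => ((h (u w) : ℝ) : ℂ)) z
      = ((deriv h (u z) : ℝ) : ℂ) * dzbar (fun w => (u w : ℂ)) z := by
  have hcomp : DifferentiableAt ℝ (fun w => h (u w)) z := hh.comp z hu
  have hf : ∀ v, fderiv ℝ (fun w => h (u w)) z v = deriv h (u z) * fderiv ℝ u z v := by
    intro v
    have := fderiv_comp (x := z) hh hu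
    rw [show (fun w => h (u w)) = h ∘ u from rfl, this]
    simp [fderiv_apply_one_eq_deriv]; ring
  simp only [dzbar, fderiv_ofReal_comp _ _ hcomp, fderiv_ofReal_comp _ _ hu, hf, smul_eq_mul]
  push_cast
  ring

lemma dzbar_dz_comm (g : ℂ → ℂ) (hg : ContDiff ℝ (⊤ : ℕ∞) g) (z : ℂ) :
    dzbar (fun w => dz g w) z = dz (fun w => dzbar g w) z := by
  have hd2' : ContDiff ℝ (⊤ : ℕ∞) (fderiv ℝ g) := hg.fderiv_right (by simp)
  have hd2 : DifferentiableAt ℝ (fderiv ℝ g) z := (hd2'.differentiable (by simp)) z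
  set A := fderiv ℝ (fderiv ℝ g) z with hA
  have hv : ∀ v : ℂ, HasFDerivAt (fun w => fderiv ℝ g w v) (A.flip v) z := by
    intro v
    have := hd2.hasFDerivAt.clm_apply (hasFDerivAt_const v z)
    simpa using this
  have hsymm : A 1 Complex.I = A Complex.I 1 := by
    have := (hg.contDiffAt (x := z)).isSymmSndFDerivAt ((by simp; exact WithTop.coe_le_coe.2 le_top))
    exact (this 1 Complex.I)
  have hdz : HasFDerivAt (fun w => dz g w)
      ((2:ℂ)⁻¹ • (A.flip 1 - Complex.I • A.flip Complex.I)) z := by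
    have := ((hv 1).sub ((hv Complex.I).const_smul Complex.I)).const_smul ((2:ℂ)⁻¹)
    exact this
  have hdzb : HasFDerivAt (fun w => dzbar g w)
      ((2:ℂ)⁻¹ • (A.flip 1 + Complex.I • A.flip Complex.I)) z := by
    have := ((hv 1).add ((hv Complex.I).const_smul Complex.I)).const_smul ((2:ℂ)⁻¹)
    exact this
  show (2:ℂ)⁻¹ • (fderiv ℝ (fun w => dz g w) z 1 + Complex.I • fderiv ℝ (fun w => dz g w) z Complex.I)
      = (2:ℂ)⁻¹ • (fderiv ℝ (fun w => dzbar g w) z 1 - Complex.I • fderiv ℝ (fun w => dzbar g w) z Complex.I)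
  rw [hdz.fderiv, hdzb.fderiv]
  simp only [ContinuousLinearMap.smul_apply, ContinuousLinearMap.sub_apply,
    ContinuousLinearMap.add_apply, ContinuousLinearMap.flip_apply, smul_eq_mul]
  rw [hsymm]
  ring

lemma differentiableAt_ofReal_comp {u : ℂ → ℝ} {z : ℂ} (hu : DifferentiableAt ℝ u z) :
    DifferentiableAt ℝ (fun w => ((u w : ℝ) : ℂ)) z :=
  Complex.ofRealCLM.differentiableAt.comp z hu

lemma dz_differentiable (g : ℂ → ℂ) (hg : ContDiff ℝ (⊤ : ℕ∞) g) :
    Differentiable ℝ (fun w => dz g w) := by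
  have hd2' : ContDiff ℝ (⊤ : ℕ∞) (fderiv ℝ g) := hg.fderiv_right (by simp)
  have h1 : Differentiable ℝ (fun w => fderiv ℝ g w (1:ℂ)) :=
    (hd2'.differentiable (by simp)).clm_apply (differentiable_const _)
  have hI : Differentiable ℝ (fun w => fderiv ℝ g w Complex.I) :=
    (hd2'.differentiable (by simp)).clm_apply (differentiable_const _)
  exact ((h1.sub (hI.const_smul Complex.I)).const_smul ((2:ℂ)⁻¹))

lemma hasDerivAt_csch (t : ℝ) (ht : Real.sinh (2*t) ≠ 0) :
    HasDerivAt (fun s : ℝ => (Real.sinh (2*s))⁻¹)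
      (-(Real.cosh (2*t) * 2) / (Real.sinh (2*t))^2) t := by
  have h1 : HasDerivAt (fun s : ℝ => 2*s) 2 t := by
    simpa using (hasDerivAt_id t).const_mul 2
  have h2 : HasDerivAt (fun s : ℝ => Real.sinh (2*s)) (Real.cosh (2*t) * 2) t :=
    (Real.hasDerivAt_sinh (2*t)).comp t h1
  exact h2.inv ht

/-- Suppose `μ = μᵉ` is non-vanishing, `(φ, μ)` and `(φᵉ, μ)` each satisfy the compatibility
conditions, and `∂φ csch 2φ = ∂φᵉ csch 2φᵉ` (derived from `∂̄(μ - μᵉ) = 0`).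
Then `φ = φᵉ`. -/
theorem same_mu_implies_same_phi
    (φ φe : ℂ → ℝ) (μ : ℂ → ℂ)
    (hsφ : ContDiff ℝ (⊤ : ℕ∞) φ) (hsφe : ContDiff ℝ (⊤ : ℕ∞) φe) (hsμ : ContDiff ℝ (⊤ : ℕ∞) μ)
    (hφpos : ∀ z, 0 < φ z) (hφepos : ∀ z, 0 < φe z)
    (hμne : ∀ z, μ z ≠ 0)
    -- compatibility conditions for (φ, μ)
    (hc1 : ∀ z, 2 * dz (fun w => dzbar (fun u => (φ u : ℂ)) w) z
      = -((Real.sinh (2 * φ z) : ℝ) : ℂ)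
        + ((‖μ z‖ ^ 2 : ℝ) : ℂ) * (((Real.sinh (2 * φ z))⁻¹ : ℝ) : ℂ))
    (hc2 : ∀ z, dzbar μ z
      = -2 * star (μ z) * dz (fun w => (φ w : ℂ)) z
          * (((Real.sinh (2 * φ z))⁻¹ : ℝ) : ℂ))
    -- compatibility conditions for (φᵉ, μᵉ) with μᵉ = μ
    (hc1e : ∀ z, 2 * dz (fun w => dzbar (fun u => (φe u : ℂ)) w) z
      = -((Real.sinh (2 * φe z) : ℝ) : ℂ)
        + ((‖μ z‖ ^ 2 : ℝ) : ℂ) * (((Real.sinh (2 * φe z))⁻¹ : ℝ) : ℂ))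
    (hc2e : ∀ z, dzbar μ z
      = -2 * star (μ z) * dz (fun w => (φe w : ℂ)) z
          * (((Real.sinh (2 * φe z))⁻¹ : ℝ) : ℂ))
    -- the derived relation ∂φ csch 2φ = ∂φᵉ csch 2φᵉ
    (hrel : ∀ z, dz (fun w => (φ w : ℂ)) z * (((Real.sinh (2 * φ z))⁻¹ : ℝ) : ℂ)
      = dz (fun w => (φe w : ℂ)) z * (((Real.sinh (2 * φe z))⁻¹ : ℝ) : ℂ)) :
    φ = φe := by
  have hφℂ : ContDiff ℝ (⊤ : ℕ∞) (fun w => ((φ w : ℝ) : ℂ)) := Complex.ofRealCLM.contDiff.comp hsφ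
  have hφeℂ : ContDiff ℝ (⊤ : ℕ∞) (fun w => ((φe w : ℝ) : ℂ)) := Complex.ofRealCLM.contDiff.comp hsφe
  funext z
  have hspos : 0 < Real.sinh (2 * φ z) := Real.sinh_pos_iff.2 (by linarith [hφpos z])
  have hsepos : 0 < Real.sinh (2 * φe z) := Real.sinh_pos_iff.2 (by linarith [hφepos z])
  have hsne : Real.sinh (2 * φ z) ≠ 0 := ne_of_gt hspos
  have hsene : Real.sinh (2 * φe z) ≠ 0 := ne_of_gt hsepos
  have hdφ : DifferentiableAt ℝ φ z := (hsφ.differentiable (by simp)) z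
  have hdφe : DifferentiableAt ℝ φe z := (hsφe.differentiable (by simp)) z
  have hhd : DifferentiableAt ℝ (fun t : ℝ => (Real.sinh (2*t))⁻¹) (φ z) :=
    (hasDerivAt_csch (φ z) hsne).differentiableAt
  have hhde : DifferentiableAt ℝ (fun t : ℝ => (Real.sinh (2*t))⁻¹) (φe z) :=
    (hasDerivAt_csch (φe z) hsene).differentiableAt
  have hcschd : DifferentiableAt ℝ (fun w => (((Real.sinh (2 * φ w))⁻¹ : ℝ) : ℂ)) z :=
    differentiableAt_ofReal_comp (hhd.comp z hdφ)
  have hcschde : DifferentiableAt ℝ (fun w => (((Real.sinh (2 * φe w))⁻¹ : ℝ) : ℂ)) z :=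
    differentiableAt_ofReal_comp (hhde.comp z hdφe)
  -- abbreviations (plain definitions, no set)
  set s := Real.sinh (2 * φ z) with hs
  set se := Real.sinh (2 * φe z) with hse
  set c := Real.cosh (2 * φ z) with hc
  set ce := Real.cosh (2 * φe z) with hce
  set m := ‖μ z‖ ^ 2 with hm
  set D := dz (fun w => ((φ w : ℝ) : ℂ)) z with hD
  set De := dz (fun w => ((φe w : ℝ) : ℂ)) z with hDe
  set nD := Complex.normSq D with hnD
  set nDe := Complex.normSq De with hnDe
  -- apply dzbar to the relation
  have h0 : dzbar (fun w => dz (fun u => ((φ u : ℝ) : ℂ)) w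
        * (((Real.sinh (2 * φ w))⁻¹ : ℝ) : ℂ)) z
      = dzbar (fun w => dz (fun u => ((φe u : ℝ) : ℂ)) w
        * (((Real.sinh (2 * φe w))⁻¹ : ℝ) : ℂ)) z := by
    congr 1
    funext w
    exact hrel w
  rw [dzbar_mul _ _ z ((dz_differentiable _ hφℂ) z) hcschd,
      dzbar_mul _ _ z ((dz_differentiable _ hφeℂ) z) hcschde,
      dzbar_dz_comm _ hφℂ z, dzbar_dz_comm _ hφeℂ z] at h0
  -- compute dzbar of csch ∘ φ
  have hA : dzbar (fun w => (((Real.sinh (2 * φ w))⁻¹ : ℝ) : ℂ)) z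
      = ((-(c * 2) / s^2 : ℝ) : ℂ) * (starRingEnd ℂ) D := by
    rw [dzbar_comp_ofReal _ _ z hhd hdφ, (hasDerivAt_csch (φ z) hsne).deriv,
      dzbar_eq_conj_dz φ z hdφ]
  have hAe : dzbar (fun w => (((Real.sinh (2 * φe w))⁻¹ : ℝ) : ℂ)) z
      = ((-(ce * 2) / se^2 : ℝ) : ℂ) * (starRingEnd ℂ) De := by
    rw [dzbar_comp_ofReal _ _ z hhde hdφe, (hasDerivAt_csch (φe z) hsene).deriv,
      dzbar_eq_conj_dz φe z hdφe]
  rw [hA, hAe, ← hs, ← hse, ← hD, ← hDe] at h0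
  have h1 := hc1 z
  have h1e := hc1e z
  rw [← hs, ← hm] at h1
  rw [← hse, ← hm] at h1e
  -- turn into a real equation
  have hE : (((-s + m * s⁻¹) * s⁻¹ * 2⁻¹ + (-(c * 2) / s^2) * nD : ℝ) : ℂ)
      = (((-se + m * se⁻¹) * se⁻¹ * 2⁻¹ + (-(ce * 2) / se^2) * nDe : ℝ) : ℂ) := by
    push_cast at h0 h1 h1e ⊢
    linear_combination h0 - (2:ℂ)⁻¹ * ((s:ℝ):ℂ)⁻¹ * h1 + (2:ℂ)⁻¹ * ((se:ℝ):ℂ)⁻¹ * h1e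
      - (-(((c:ℝ):ℂ) * 2) / ((s:ℝ):ℂ)^2) * Complex.mul_conj D
      + (-(((ce:ℝ):ℂ) * 2) / ((se:ℝ):ℂ)^2) * Complex.mul_conj De
  have hEr : (-s + m * s⁻¹) * s⁻¹ * 2⁻¹ + (-(c * 2) / s^2) * nD
      = (-se + m * se⁻¹) * se⁻¹ * 2⁻¹ + (-(ce * 2) / se^2) * Complex.normSq De :=
    Complex.ofReal_inj.mp hE
  -- |D|²/s² = |De|²/se²
  have hk : nD * (s⁻¹ * s⁻¹) = nDe * (se⁻¹ * se⁻¹) := by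
    have h2 := congrArg Complex.normSq (hrel z)
    rw [map_mul, map_mul, Complex.normSq_ofReal, Complex.normSq_ofReal] at h2
    rw [← hs, ← hse, ← hD, ← hDe, ← hnD, ← hnDe] at h2
    linarith [h2]
  have hk' : nD * se^2 = nDe * s^2 := by
    field_simp at hk
    linarith [hk]
  -- the key real identity
  have hfactor : (2*s^2*se^2) ≠ 0 := by positivity
  have hkey2 : (m*se^2 - m*s^2) * (2*s^2*se^2)
      = (4 * nD * se^2 * (c-ce)) * (2*s^2*se^2) := by
    field_simp at hEr
    rw [show Complex.normSq De = nDe from hnDe.symm] at hEr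
    linear_combination 2*s^2*se^2 * hEr + 8*ce*s^2*se^2 * hk'
  have hkey := mul_right_cancel₀ hfactor hkey2
  -- conclude
  have hmpos : 0 < m := pow_pos (norm_pos_iff.2 (hμne z)) 2
  have hnDnonneg : 0 ≤ nD := hnD ▸ Complex.normSq_nonneg D
  have hcosh : c = Real.cosh (2 * φ z) := hc
  have hcoshe : ce = Real.cosh (2 * φe z) := hce
  have hsinh : s = Real.sinh (2 * φ z) := hs
  have hsinhe : se = Real.sinh (2 * φe z) := hse
  clear_value nD nDe s se c ce m
  clear h0 h1 h1e hA hAe hE hEr hk hkey2 hcschd hcschde hhd hhde hdφ hdφe hφℂ hφeℂ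
    hrel hc1 hc2 hc1e hc2e hsμ hsφ hsφe hfactor hD hDe hnD hnDe hs hse hc hce hm
  clear D De
  rcases lt_trichotomy (φ z) (φe z) with h | h | h
  · exfalso
    have h1' : s < se := by rw [hsinh, hsinhe]; exact Real.sinh_lt_sinh.2 (by linarith)
    have h2' : c < ce := by
      rw [hcosh, hcoshe, Real.cosh_lt_cosh,
        abs_of_pos (by linarith [hφpos z] : (0:ℝ) < 2 * φ z),
        abs_of_pos (by linarith [hφepos z] : (0:ℝ) < 2 * φe z)]
      linarith
    have hL : 0 < m * (se^2 - s^2) := mul_pos hmpos (by nlinarith)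
    have hR : 4 * nD * se^2 * (c-ce) ≤ 0 := by
      have h4 : 0 ≤ 4 * nD * se^2 := by positivity
      nlinarith
    nlinarith [hkey]
  · exact h
  · exfalso
    have h1' : se < s := by rw [hsinh, hsinhe]; exact Real.sinh_lt_sinh.2 (by linarith)
    have h2' : ce < c := by
      rw [hcosh, hcoshe, Real.cosh_lt_cosh,
        abs_of_pos (by linarith [hφpos z] : (0:ℝ) < 2 * φ z),
        abs_of_pos (by linarith [hφepos z] : (0:ℝ) < 2 * φe z)]
      linarith
    have hL : m * (se^2 - s^2) < 0 := by nlinarith [mul_pos (sub_pos.2 h1') (by linarith : (0:ℝ) < s + se), hmpos]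
    have hR : 0 ≤ 4 * nD * se^2 * (c-ce) := by
      have h4 : 0 ≤ 4 * nD * se^2 := by positivity
      nlinarith
    nlinarith [hkey]
end
end
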